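/- arXiv:1204.1180 — 2 statements merged into one kernel-verified Lean document; each statement's English description precedes it below -/
import Mathlib

section
/- For every step distribution D, every p ≥ 0, every x ∈ ℤ^d and every real ℓ with 0 < ℓ < |x|, the self-avoiding-walk two-point function obeys the Simon–Lieb type inequality (as an inequality in [0,∞]): G_p(x) ≤ ∑_{u,v ∈ ℤ^d : |u| ≤ ℓ < |v|} G_p(u) · pD(v−u) · G_p(x−v). -/
open scoped BigOperators ENNReal
open Filter MeasureTheory

noncomputable section

namespace LongRange

abbrev V (d : ℕ) : Type := Fin d → ℤ

variable {d : ℕ}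

def nrm (x : V d) : ℝ := Real.sqrt (∑ i, ((x i : ℝ)) ^ 2)

def knrm (k : Fin d → ℝ) : ℝ := Real.sqrt (∑ i, (k i) ^ 2)

def bkt (L : ℝ) (x : V d) : ℝ := max (nrm x) L

def kdelta (x : V d) : ℝ := if x = 0 then 1 else 0

structure IsStepDist (D : V d → ℝ) : Prop where
  nonneg : ∀ x, 0 ≤ D x
  le_one : ∀ x, D x ≤ 1
  sum_one : HasSum D 1
  ne_one : D 0 ≠ 1
  reflect : ∀ (s : Fin d → Bool) (x : V d),
      D (fun i => if s i then -(x i) else x i) = D x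
  perm : ∀ (e : Equiv.Perm (Fin d)) (x : V d), D (fun i => x (e i)) = D x

def convPow (D : V d → ℝ) : ℕ → V d → ℝ
  | 0, x => kdelta x
  | n + 1, x => ∑' y : V d, convPow D n y * D (x - y)

def Sgreen (D : V d → ℝ) (p : ℝ) (x : V d) : ℝ≥0∞ :=
  ∑' n : ℕ, ENNReal.ofReal (p ^ n * convPow D n x)

def sawG (D : V d → ℝ) (p : ℝ) (x : V d) : ℝ≥0∞ :=
  ∑' n : ℕ,
    ∑' ω : {ω : Fin (n + 1) → V d //
        ω 0 = 0 ∧ ω (Fin.last n) = x ∧ Function.Injective ω},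
      ENNReal.ofReal (p ^ n * ∏ j : Fin n, D (ω.1 j.succ - ω.1 j.castSucc))

def chi (D : V d → ℝ) (p : ℝ) : ℝ≥0∞ := ∑' x : V d, sawG D p x

def pc (D : V d → ℝ) : ℝ := sSup {p : ℝ | 0 ≤ p ∧ chi D p < ⊤}

def hatD (D : V d → ℝ) (k : Fin d → ℝ) : ℝ :=
  ∑' x : V d, Real.cos (∑ i, k i * (x i : ℝ)) * D x

def ItemI (D : V d → ℝ) (α L c₁ : ℝ) : Prop :=
  ∀ x : V d, D x ≤ c₁ * L ^ α * bkt L x ^ (-(d : ℝ) - α)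

def ItemII (D : V d → ℝ) (α L v c₄ ε : ℝ) : Prop :=
  ∀ k : Fin d → ℝ, (∀ i, |k i| ≤ Real.pi) →
    |1 - hatD D k - v * knrm k ^ min α 2| ≤ c₄ * v * knrm k ^ min α 2 * (L * knrm k) ^ ε

def ItemIIIa (D : V d → ℝ) (α L c₅ : ℝ) : Prop :=
  ∀ n : ℕ, 1 ≤ n → ∀ x : V d,
    convPow D n x ≤ c₅ * L ^ (-(d : ℝ)) * (n : ℝ) ^ (-(d : ℝ) / min α 2)

def ItemIIIb (D : V d → ℝ) (Δ : ℝ) : Prop :=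
  ∀ k : Fin d → ℝ, (∀ i, |k i| ≤ Real.pi) → 1 - hatD D k ≤ 2 - Δ

def ItemIIIc (D : V d → ℝ) (L Δ : ℝ) : Prop :=
  ∀ k : Fin d → ℝ, (∀ i, |k i| ≤ Real.pi) → (∃ i, 1 / L ≤ |k i|) → Δ ≤ 1 - hatD D k

def ItemIV (D : V d → ℝ) (α L c₆ : ℝ) : Prop :=
  ∀ n : ℕ, 1 ≤ n → ∀ x : V d,
    convPow D n x ≤ c₆ * L ^ min α 2 * (n : ℝ) * bkt L x ^ (-(d : ℝ) - min α 2)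

def ItemV (D : V d → ℝ) (α L c₇ : ℝ) : Prop :=
  ∀ n : ℕ, 1 ≤ n → ∀ x y : V d, nrm y ≤ nrm x / 3 →
    |convPow D n x - (convPow D n (x + y) + convPow D n (x - y)) / 2| ≤
      c₇ * L ^ min α 2 * bkt L y ^ 2 * (n : ℝ) * bkt L x ^ (-(d : ℝ) - min α 2 - 2)


-- aux
def WalkTo (d : ℕ) (e : V d) : Type :=
  Σ n : ℕ, {ω : Fin (n + 1) → V d //
      ω 0 = 0 ∧ ω (Fin.last n) = e ∧ Function.Injective ω}

def wval (D : V d → ℝ) (p : ℝ) {e : V d} (w : WalkTo d e) : ℝ≥0∞ :=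
  ENNReal.ofReal (p ^ w.1 * ∏ j : Fin w.1, D (w.2.1 j.succ - w.2.1 j.castSucc))

lemma sawG_eq_tsum (D : V d → ℝ) (p : ℝ) (e : V d) :
    sawG D p e = ∑' w : WalkTo d e, wval D p w := by
  rw [sawG]
  exact (ENNReal.tsum_sigma' (fun w : WalkTo d e => wval D p w)).symm

def wext {e : V d} (w : WalkTo d e) : ℕ → V d :=
  fun t => w.2.1 ⟨min t w.1, Nat.lt_succ_of_le (min_le_right _ _)⟩

lemma wext_eq {e : V d} (w : WalkTo d e) {t : ℕ} (ht : t ≤ w.1) (h2 : t < w.1 + 1) :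
    wext w t = w.2.1 ⟨t, h2⟩ := by
  have h3 : min t w.1 = t := min_eq_left ht
  simp only [wext, h3]

lemma wext_zero {e : V d} (w : WalkTo d e) : wext w 0 = 0 := by
  rw [wext_eq w (Nat.zero_le _) (Nat.succ_pos _),
    show (⟨0, Nat.succ_pos _⟩ : Fin (w.1 + 1)) = 0 from Fin.ext (by simp)]
  exact w.2.2.1

lemma wext_top {e : V d} (w : WalkTo d e) : wext w w.1 = e := by
  rw [wext_eq w le_rfl (Nat.lt_succ_self _),
    show (⟨w.1, Nat.lt_succ_self _⟩ : Fin (w.1 + 1)) = Fin.last w.1 from rfl]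
  exact w.2.2.2.1


lemma nrm_zero : nrm (0 : V d) = 0 := by simp [nrm]


section Cross

variable (ℓ : ℝ) {x : V d}

def jdx (hx : ℓ < nrm x) (w : WalkTo d x) : ℕ :=
  @Nat.find (fun t => ℓ < nrm (wext w t)) (fun _ => Classical.dec _)
    ⟨w.1, by show ℓ < nrm (wext w w.1); rw [wext_top]; exact hx⟩

lemma jdx_spec (hx : ℓ < nrm x) (w : WalkTo d x) : ℓ < nrm (wext w (jdx ℓ hx w)) :=
  @Nat.find_spec (fun t => ℓ < nrm (wext w t)) (fun _ => Classical.dec _) _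

lemma jdx_min (hx : ℓ < nrm x) (w : WalkTo d x) {t : ℕ} (ht : t < jdx ℓ hx w) :
    ¬ ℓ < nrm (wext w t) :=
  @Nat.find_min (fun t => ℓ < nrm (wext w t)) (fun _ => Classical.dec _) _ _ ht

lemma jdx_le (hx : ℓ < nrm x) (w : WalkTo d x) : jdx ℓ hx w ≤ w.1 :=
  @Nat.find_le _ (fun t => ℓ < nrm (wext w t)) (fun _ => Classical.dec _) _
    (by show ℓ < nrm (wext w w.1); rw [wext_top]; exact hx)

lemma jdx_pos (hℓ : 0 ≤ ℓ) (hx : ℓ < nrm x) (w : WalkTo d x) : 1 ≤ jdx ℓ hx w := by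
  by_contra h
  push_neg at h
  have h0 : jdx ℓ hx w = 0 := by omega
  have h1 := jdx_spec ℓ hx w
  rw [h0, wext_zero, nrm_zero] at h1
  linarith

def wA (hx : ℓ < nrm x) (w : WalkTo d x) : WalkTo d (wext w (jdx ℓ hx w - 1)) :=
  ⟨jdx ℓ hx w - 1, ⟨fun i => wext w i.val, by
      show wext w (0 : Fin _).val = 0
      rw [Fin.val_zero]
      exact wext_zero w, by
      show wext w (Fin.last _).val = _
      rw [Fin.val_last], by
      intro i i' hii
      have hm : jdx ℓ hx w - 1 ≤ w.1 := le_trans (Nat.sub_le _ _) (jdx_le ℓ hx w)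
      have hii' : wext w i.val = wext w i'.val := hii
      rw [wext_eq w (by omega) (by omega), wext_eq w (by omega) (by omega)] at hii'
      have := w.2.2.2.2 hii'
      exact Fin.ext (by simpa using congrArg Fin.val this)⟩⟩

def wB (hx : ℓ < nrm x) (w : WalkTo d x) : WalkTo d (x - wext w (jdx ℓ hx w)) :=
  ⟨w.1 - jdx ℓ hx w, ⟨fun i => wext w (jdx ℓ hx w + i.val) - wext w (jdx ℓ hx w), by
      show wext w (jdx ℓ hx w + (0 : Fin _).val) - _ = 0
      rw [Fin.val_zero, Nat.add_zero]
      exact sub_self _, by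
      show wext w (jdx ℓ hx w + (Fin.last _).val) - _ = _
      rw [Fin.val_last, Nat.add_sub_cancel' (jdx_le ℓ hx w), wext_top], by
      intro i i' hii
      have hj := jdx_le ℓ hx w
      have hii' : wext w (jdx ℓ hx w + i.val) - wext w (jdx ℓ hx w)
          = wext w (jdx ℓ hx w + i'.val) - wext w (jdx ℓ hx w) := hii
      have hii'' : wext w (jdx ℓ hx w + i.val) = wext w (jdx ℓ hx w + i'.val) :=
        sub_left_inj.mp hii'
      have hi : i.val ≤ w.1 - jdx ℓ hx w := by omega
      have hi' : i'.val ≤ w.1 - jdx ℓ hx w := by omega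
      rw [wext_eq w (by omega) (by omega), wext_eq w (by omega) (by omega)] at hii''
      have := w.2.2.2.2 hii''
      exact Fin.ext (by have h2 := congrArg Fin.val this; simp at h2; omega)⟩⟩

end Cross


def Kty (d : ℕ) (x : V d) : Type :=
  Σ u : V d, Σ v : V d, WalkTo d u × WalkTo d (x - v)

def Phi (ℓ : ℝ) {x : V d} (hx : ℓ < nrm x) (w : WalkTo d x) : Kty d x :=
  ⟨wext w (jdx ℓ hx w - 1), wext w (jdx ℓ hx w), (wA ℓ hx w, wB ℓ hx w)⟩

def gK (D : V d → ℝ) (p ℓ : ℝ) {x : V d} (k : Kty d x) : ℝ≥0∞ :=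
  if nrm k.1 ≤ ℓ ∧ ℓ < nrm k.2.1 then
    wval D p k.2.2.1 * ENNReal.ofReal (p * D (k.2.1 - k.1)) * wval D p k.2.2.2
  else 0

lemma gK_Phi (D : V d → ℝ) (hD : ∀ y, 0 ≤ D y) {p : ℝ} (hp : 0 ≤ p) {ℓ : ℝ}
    (hℓ : 0 < ℓ) {x : V d} (hx : ℓ < nrm x) (w : WalkTo d x) :
    wval D p w = gK D p ℓ (Phi ℓ hx w) := by
  have hj1 : 1 ≤ jdx ℓ hx w := jdx_pos ℓ hℓ.le hx w
  have hjle : jdx ℓ hx w ≤ w.1 := jdx_le ℓ hx w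
  set j := jdx ℓ hx w with hjdef
  have hcond : nrm (wext w (j - 1)) ≤ ℓ ∧ ℓ < nrm (wext w j) :=
    ⟨le_of_not_gt (jdx_min ℓ hx w (by omega)), jdx_spec ℓ hx w⟩
  have hPhi : gK D p ℓ (Phi ℓ hx w) =
      wval D p (wA ℓ hx w) *
        ENNReal.ofReal (p * D (wext w j - wext w (j - 1))) * wval D p (wB ℓ hx w) := by
    show (if nrm (wext w (j - 1)) ≤ ℓ ∧ ℓ < nrm (wext w j) then
        wval D p (wA ℓ hx w) *
          ENNReal.ofReal (p * D (wext w j - wext w (j - 1))) * wval D p (wB ℓ hx w)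
      else 0) = _
    rw [if_pos hcond]
  rw [hPhi]
  set f : ℕ → ℝ := fun t => D (wext w (t + 1) - wext w t) with hf
  have hf0 : ∀ t, 0 ≤ f t := fun t => hD _
  have hwv0 : wval D p w = ENNReal.ofReal (p ^ w.1 * ∏ t ∈ Finset.range w.1, f t) := by
    show ENNReal.ofReal (p ^ w.1 * ∏ t : Fin w.1, D (w.2.1 t.succ - w.2.1 t.castSucc)) = _
    congr 1
    congr 1
    rw [← Fin.prod_univ_eq_prod_range f w.1]
    refine Finset.prod_congr rfl fun t _ => ?_
    show D _ = D (wext w (t.val + 1) - wext w t.val)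
    rw [wext_eq w (by omega) (by omega), wext_eq w (by omega) (by omega)]
    all_goals (congr 2 <;> exact Fin.ext rfl)
  have hwvA : wval D p (wA ℓ hx w)
      = ENNReal.ofReal (p ^ (j - 1) * ∏ t ∈ Finset.range (j - 1), f t) := by
    show ENNReal.ofReal (p ^ (j - 1) *
        ∏ t : Fin (j - 1), D ((wA ℓ hx w).2.1 t.succ - (wA ℓ hx w).2.1 t.castSucc)) = _
    congr 1
    congr 1
    rw [← Fin.prod_univ_eq_prod_range f (j - 1)]
    exact Finset.prod_congr rfl fun t _ => rfl
  have hwvB : wval D p (wB ℓ hx w)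
      = ENNReal.ofReal (p ^ (w.1 - j) * ∏ t ∈ Finset.range (w.1 - j), f (j + t)) := by
    show ENNReal.ofReal (p ^ (w.1 - j) *
        ∏ t : Fin (w.1 - j), D ((wB ℓ hx w).2.1 t.succ - (wB ℓ hx w).2.1 t.castSucc)) = _
    congr 1
    congr 1
    rw [← Fin.prod_univ_eq_prod_range (fun t => f (j + t)) (w.1 - j)]
    refine Finset.prod_congr rfl fun t _ => ?_
    show D ((wext w (j + (t.val + 1)) - wext w j) - (wext w (j + t.val) - wext w j))
        = f (j + t.val)
    rw [sub_sub_sub_cancel_right, ← add_assoc]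
  have hmid : D (wext w j - wext w (j - 1)) = f (j - 1) := by
    show D _ = D (wext w (j - 1 + 1) - wext w (j - 1))
    rw [Nat.sub_add_cancel hj1]
  have hA0 : 0 ≤ p ^ (j - 1) * ∏ t ∈ Finset.range (j - 1), f t :=
    mul_nonneg (pow_nonneg hp _) (Finset.prod_nonneg fun t _ => hf0 t)
  have hB0 : 0 ≤ p * f (j - 1) := mul_nonneg hp (hf0 _)
  have key : p ^ w.1 * ∏ t ∈ Finset.range w.1, f t =
      (p ^ (j - 1) * ∏ t ∈ Finset.range (j - 1), f t) * (p * f (j - 1)) *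
      (p ^ (w.1 - j) * ∏ t ∈ Finset.range (w.1 - j), f (j + t)) := by
    have h1 : ∏ t ∈ Finset.range w.1, f t
        = (∏ t ∈ Finset.range j, f t) * ∏ t ∈ Finset.Ico j w.1, f t :=
      (Finset.prod_range_mul_prod_Ico f hjle).symm
    have h2 : ∏ t ∈ Finset.range j, f t
        = (∏ t ∈ Finset.range (j - 1), f t) * f (j - 1) := by
      conv_lhs => rw [show j = (j - 1) + 1 by omega]
      rw [Finset.prod_range_succ]
    have h3 : ∏ t ∈ Finset.Ico j w.1, f t = ∏ t ∈ Finset.range (w.1 - j), f (j + t) :=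
      Finset.prod_Ico_eq_prod_range f j w.1
    have h4 : p ^ w.1 = p ^ (j - 1) * p * p ^ (w.1 - j) := by
      rw [← pow_succ, ← pow_add]
      congr 1
      omega
    rw [h1, h2, h3, h4]
    ring
  rw [hwv0, hwvA, hwvB, hmid, key, ENNReal.ofReal_mul (mul_nonneg hA0 hB0),
    ENNReal.ofReal_mul hA0]


lemma recover {ℓ : ℝ} (hℓ : 0 < ℓ) {x : V d} (hx : ℓ < nrm x) (w : WalkTo d x)
    (i : Fin (w.1 + 1)) :
    w.2.1 i = if i.val ≤ jdx ℓ hx w - 1 then wext (wA ℓ hx w) i.val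
      else wext (wB ℓ hx w) (i.val - jdx ℓ hx w) + wext w (jdx ℓ hx w) := by
  have hj1 : 1 ≤ jdx ℓ hx w := jdx_pos ℓ hℓ.le hx w
  have hjle : jdx ℓ hx w ≤ w.1 := jdx_le ℓ hx w
  have hi : i.val ≤ w.1 := by omega
  by_cases h : i.val ≤ jdx ℓ hx w - 1
  · rw [if_pos h]
    have h1 : wext (wA ℓ hx w) i.val = wext w i.val :=
      (wext_eq (wA ℓ hx w) h (Nat.lt_succ_of_le h)).trans rfl
    rw [h1, wext_eq w hi i.isLt]
    all_goals exact congrArg _ (Fin.ext rfl)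
  · rw [if_neg h]
    have hji : jdx ℓ hx w ≤ i.val := by omega
    have hb : i.val - jdx ℓ hx w ≤ w.1 - jdx ℓ hx w := by omega
    have h1 : wext (wB ℓ hx w) (i.val - jdx ℓ hx w)
        = wext w (jdx ℓ hx w + (i.val - jdx ℓ hx w)) - wext w (jdx ℓ hx w) :=
      (wext_eq (wB ℓ hx w) hb (Nat.lt_succ_of_le hb)).trans rfl
    rw [h1, show jdx ℓ hx w + (i.val - jdx ℓ hx w) = i.val from by omega,
      wext_eq w hi i.isLt, sub_add_cancel]
    all_goals exact congrArg₂ _ (congrArg _ (Fin.ext rfl)) rfl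

lemma Phi_inj {ℓ : ℝ} (hℓ : 0 < ℓ) {x : V d} (hx : ℓ < nrm x) :
    Function.Injective (Phi ℓ hx (x := x)) := by
  intro a b hab
  have hv : wext a (jdx ℓ hx a) = wext b (jdx ℓ hx b) :=
    congrArg (fun k : Kty d x => k.2.1) hab
  have hm : jdx ℓ hx a - 1 = jdx ℓ hx b - 1 :=
    congrArg (fun k : Kty d x => k.2.2.1.1) hab
  have hn2 : a.1 - jdx ℓ hx a = b.1 - jdx ℓ hx b :=
    congrArg (fun k : Kty d x => k.2.2.2.1) hab
  have hwA : wext (wA ℓ hx a) = wext (wA ℓ hx b) :=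
    congrArg (fun k : Kty d x => wext k.2.2.1) hab
  have hwB : wext (wB ℓ hx a) = wext (wB ℓ hx b) :=
    congrArg (fun k : Kty d x => wext k.2.2.2) hab
  have hja := jdx_pos ℓ hℓ.le hx a
  have hjb := jdx_pos ℓ hℓ.le hx b
  have hjla := jdx_le ℓ hx a
  have hjlb := jdx_le ℓ hx b
  have hj : jdx ℓ hx a = jdx ℓ hx b := by omega
  have hn : a.1 = b.1 := by omega
  obtain ⟨na, ωa, pa⟩ := a
  obtain ⟨nb, ωb, pb⟩ := b
  simp only at hn
  subst hn
  suffices hω : ωa = ωb by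
    subst hω
    rfl
  funext i
  have ra : ωa i = if i.val ≤ jdx ℓ hx ⟨na, ⟨ωa, pa⟩⟩ - 1
      then wext (wA ℓ hx ⟨na, ⟨ωa, pa⟩⟩) i.val
      else wext (wB ℓ hx ⟨na, ⟨ωa, pa⟩⟩) (i.val - jdx ℓ hx ⟨na, ⟨ωa, pa⟩⟩)
        + wext ⟨na, ⟨ωa, pa⟩⟩ (jdx ℓ hx ⟨na, ⟨ωa, pa⟩⟩) :=
    recover hℓ hx ⟨na, ⟨ωa, pa⟩⟩ i
  have rb : ωb i = if i.val ≤ jdx ℓ hx ⟨na, ⟨ωb, pb⟩⟩ - 1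
      then wext (wA ℓ hx ⟨na, ⟨ωb, pb⟩⟩) i.val
      else wext (wB ℓ hx ⟨na, ⟨ωb, pb⟩⟩) (i.val - jdx ℓ hx ⟨na, ⟨ωb, pb⟩⟩)
        + wext ⟨na, ⟨ωb, pb⟩⟩ (jdx ℓ hx ⟨na, ⟨ωb, pb⟩⟩) :=
    recover hℓ hx ⟨na, ⟨ωb, pb⟩⟩ i
  rw [ra, rb, hwA, hwB, hv, hj]


lemma tsum_gK (D : V d → ℝ) (p ℓ : ℝ) (x : V d) :
    ∑' k : Kty d x, gK D p ℓ k =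
      ∑' u : V d, ∑' v : V d,
        if nrm u ≤ ℓ ∧ ℓ < nrm v then
          sawG D p u * ENNReal.ofReal (p * D (v - u)) * sawG D p (x - v)
        else 0 := by
  refine (ENNReal.tsum_sigma' (fun k : Kty d x => gK D p ℓ k)).trans ?_
  refine tsum_congr fun u => ?_
  refine (ENNReal.tsum_sigma'
    (fun q : Σ v : V d, WalkTo d u × WalkTo d (x - v) => gK D p ℓ ⟨u, q⟩)).trans ?_
  refine tsum_congr fun v => ?_
  refine (ENNReal.tsum_prod'
    (f := fun r : WalkTo d u × WalkTo d (x - v) => gK D p ℓ ⟨u, v, r⟩)).trans ?_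
  show (∑' w1 : WalkTo d u, ∑' w2 : WalkTo d (x - v),
      if nrm u ≤ ℓ ∧ ℓ < nrm v then
        wval D p w1 * ENNReal.ofReal (p * D (v - u)) * wval D p w2
      else 0) = _
  by_cases hc : nrm u ≤ ℓ ∧ ℓ < nrm v
  · simp only [if_pos hc]
    rw [sawG_eq_tsum, sawG_eq_tsum]
    calc (∑' w1 : WalkTo d u, ∑' w2 : WalkTo d (x - v),
          wval D p w1 * ENNReal.ofReal (p * D (v - u)) * wval D p w2)
        = ∑' w1 : WalkTo d u, (wval D p w1 * ENNReal.ofReal (p * D (v - u))) *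
            ∑' w2 : WalkTo d (x - v), wval D p w2 :=
          tsum_congr fun w1 => ENNReal.tsum_mul_left
      _ = ∑' w1 : WalkTo d u, wval D p w1 * (ENNReal.ofReal (p * D (v - u)) *
            ∑' w2 : WalkTo d (x - v), wval D p w2) :=
          tsum_congr fun w1 => mul_assoc _ _ _
      _ = (∑' w1 : WalkTo d u, wval D p w1) * (ENNReal.ofReal (p * D (v - u)) *
            ∑' w2 : WalkTo d (x - v), wval D p w2) := ENNReal.tsum_mul_right
      _ = (∑' w1 : WalkTo d u, wval D p w1) * ENNReal.ofReal (p * D (v - u)) *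
            ∑' w2 : WalkTo d (x - v), wval D p w2 := (mul_assoc _ _ _).symm
  · simp only [if_neg hc, tsum_zero]


/-- Simon–Lieb type inequality for the SAW two-point function. -/
theorem statement10 (d : ℕ) (hd : 1 ≤ d) (D : V d → ℝ) (hD : IsStepDist D)
    (p : ℝ) (hp : 0 ≤ p) (x : V d) (ℓ : ℝ) (hℓ : 0 < ℓ) (hℓx : ℓ < nrm x) :
    sawG D p x ≤
      ∑' u : V d, ∑' v : V d,
        if nrm u ≤ ℓ ∧ ℓ < nrm v then
          sawG D p u * ENNReal.ofReal (p * D (v - u)) * sawG D p (x - v)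
        else 0 := by
  rw [sawG_eq_tsum]
  calc (∑' w : WalkTo d x, wval D p w)
      = ∑' w : WalkTo d x, gK D p ℓ (Phi ℓ hℓx w) :=
        tsum_congr fun w => gK_Phi D hD.nonneg hp hℓ hℓx w
    _ ≤ ∑' k : Kty d x, gK D p ℓ k :=
        ENNReal.tsum_comp_le_tsum_of_injective (Phi_inj hℓ hℓx) _
    _ = _ := tsum_gK D p ℓ x

end LongRange
end
end

section
/- Let d ≥ 1 be an integer and let a ≥ b > 0 with a + b > d. There is a constant C = C(a,b,d) < ∞, independent of L, such that for every L ≥ 1 and every x ∈ ℤ^d: if a > d then ∑_{y∈ℤ^d} ⟨x−y⟩_L^{−a} ⟨y⟩_L^{−b} ≤ C·L^{d−a}·⟨x⟩_L^{−b}, and if a < d then ∑_{y∈ℤ^d} ⟨x−y⟩_L^{−a} ⟨y⟩_L^{−b} ≤ C·⟨x⟩_L^{d−a−b}. -/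
open scoped BigOperators ENNReal

noncomputable section

namespace LongRange

variable {d : ℕ}

/-! Everything reduces to counting lattice points on dyadic shells. As `⟨y⟩_L ≥ 1`, a nonempty
shell `ρ ≤ ⟨y⟩_L ≤ 2ρ` has `ρ ≥ 1/2` and lies in a cube with `(4ρ + 1)^d ≤ (6ρ)^d` lattice points,
so summing `⟨y⟩_L^{-s}` over the shells `ρ = 2^k R` (resp. `ρ = 2^{-k-1} R`) is a geometric series:
`∑_{⟨y⟩_L ≥ R} ⟨y⟩_L^{-s} ≲ R^{d-s}` for `s > d` and `∑_{⟨y⟩_L ≤ R} ⟨y⟩_L^{-s} ≲ R^{d-s}` for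
`0 ≤ s < d`.

Since `⟨x⟩_L ≤ ⟨x-y⟩_L + ⟨y⟩_L`, one of the two factors is at least `⟨x⟩_L / 2`. For `a > d`
this gives `⟨x-y⟩^{-a} ⟨y⟩^{-b} ≲ ⟨x⟩^{-b} (⟨x-y⟩^{-a} + ⟨y⟩^{-a})`, and `∑_y ⟨y⟩_L^{-a} ≲ L^{d-a}`.
For `a < d` we split `y` into the regions `⟨y⟩ ≥ 2⟨x⟩` (where `⟨x-y⟩ ≥ ⟨y⟩/2`: a tail sum with
exponent `a + b`), `⟨x⟩/2 ≤ ⟨y⟩ < 2⟨x⟩` (a ball sum of `⟨x-y⟩^{-a}` over `⟨x-y⟩ ≤ 3⟨x⟩`) and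
`⟨y⟩ < ⟨x⟩/2` (a ball sum of `⟨y⟩^{-b}`). -/

def toEuclidean (x : V d) : EuclideanSpace ℝ (Fin d) := WithLp.toLp 2 fun i => (x i : ℝ)

lemma nrm_eq_norm_toEuclidean (x : V d) : nrm x = ‖toEuclidean x‖ := by
  simp [nrm, toEuclidean, EuclideanSpace.norm_eq]

lemma toEuclidean_add (x y : V d) : toEuclidean (x + y) = toEuclidean x + toEuclidean y := by
  ext i; simp [toEuclidean]

lemma toEuclidean_neg (x : V d) : toEuclidean (-x) = -toEuclidean x := by
  ext i; simp [toEuclidean]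

lemma nrm_nonneg (x : V d) : 0 ≤ nrm x := Real.sqrt_nonneg _

lemma nrm_add_le (x y : V d) : nrm (x + y) ≤ nrm x + nrm y := by
  simpa only [nrm_eq_norm_toEuclidean, toEuclidean_add] using norm_add_le _ _

lemma nrm_neg (x : V d) : nrm (-x) = nrm x := by
  rw [nrm_eq_norm_toEuclidean, nrm_eq_norm_toEuclidean, toEuclidean_neg, norm_neg]

lemma abs_apply_le_nrm (x : V d) (i : Fin d) : |(x i : ℝ)| ≤ nrm x := by
  simpa [nrm_eq_norm_toEuclidean, toEuclidean] using PiLp.norm_apply_le (toEuclidean x) i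

lemma le_bkt (L : ℝ) (x : V d) : L ≤ bkt L x := le_max_right _ _

lemma nrm_le_bkt (L : ℝ) (x : V d) : nrm x ≤ bkt L x := le_max_left _ _

lemma one_le_bkt {L : ℝ} (hL : 1 ≤ L) (x : V d) : 1 ≤ bkt L x := hL.trans (le_bkt L x)

lemma bkt_pos {L : ℝ} (hL : 1 ≤ L) (x : V d) : 0 < bkt L x :=
  one_pos.trans_le (one_le_bkt hL x)

lemma bkt_add_le (L : ℝ) (x y : V d) : bkt L (x + y) ≤ bkt L x + bkt L y :=
  max_le ((nrm_add_le x y).trans (add_le_add (nrm_le_bkt L x) (nrm_le_bkt L y)))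
    (le_add_of_le_of_nonneg (le_bkt L x) ((nrm_nonneg y).trans (nrm_le_bkt L y)))

lemma bkt_neg (L : ℝ) (x : V d) : bkt L (-x) = bkt L x := by
  rw [bkt, bkt, nrm_neg]

def latticeBox (d : ℕ) (r : ℝ) : Finset (V d) :=
  Finset.Icc (fun _ => -(⌊r⌋₊ : ℤ)) (fun _ => (⌊r⌋₊ : ℤ))

lemma mem_latticeBox_of_nrm_le {y : V d} {r : ℝ} (hy : nrm y ≤ r) : y ∈ latticeBox d r := by
  have hcoord (i : Fin d) : |y i| ≤ ⌊r⌋₊ := by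
    have : ((|y i| : ℤ) : ℝ) < ⌊r⌋₊ + 1 := by
      push_cast
      exact ((abs_apply_le_nrm y i).trans hy).trans_lt (Nat.lt_floor_add_one r)
    exact Int.lt_add_one_iff.1 (by exact_mod_cast this)
  simp only [latticeBox, Finset.mem_Icc]
  exact ⟨fun i => (abs_le.1 (hcoord i)).1, fun i => (abs_le.1 (hcoord i)).2⟩

lemma card_latticeBox_le {r : ℝ} (hr : 0 ≤ r) :
    ((latticeBox d r).card : ℝ) ≤ (2 * r + 1) ^ d := by
  have hcard : (latticeBox d r).card = (2 * ⌊r⌋₊ + 1) ^ d := by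
    rw [latticeBox, Pi.card_Icc]
    simp only [Int.card_Icc, Finset.prod_const, Finset.card_univ, Fintype.card_fin]
    congr 1
    omega
  rw [hcard]
  push_cast
  gcongr
  exact Nat.floor_le hr

lemma tsum_indicator_le_of_forall_nrm_le {A : Set (V d)} {f : V d → ℝ≥0∞} {r c : ℝ}
    (hr : 0 ≤ r) (hc : 0 ≤ c) (hA : ∀ y ∈ A, nrm y ≤ r)
    (hf : ∀ y ∈ A, f y ≤ ENNReal.ofReal c) :
    ∑' y, A.indicator f y ≤ ENNReal.ofReal ((2 * r + 1) ^ d * c) := by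
  set B := latticeBox d r
  calc ∑' y, A.indicator f y
      ≤ ∑' y, (B : Set (V d)).indicator (fun _ => ENNReal.ofReal c) y := by
        refine ENNReal.tsum_le_tsum fun y => ?_
        by_cases hy : y ∈ A
        · rw [Set.indicator_of_mem hy,
            Set.indicator_of_mem (Finset.mem_coe.2 (mem_latticeBox_of_nrm_le (hA y hy)))]
          exact hf y hy
        · rw [Set.indicator_of_notMem hy]
          exact zero_le
    _ = B.card * ENNReal.ofReal c := by
        rw [← tsum_subtype, Finset.tsum_subtype' B fun _ => ENNReal.ofReal c, Finset.sum_const,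
          nsmul_eq_mul]
    _ ≤ ENNReal.ofReal ((2 * r + 1) ^ d * c) := by
        rw [← ENNReal.ofReal_natCast, ← ENNReal.ofReal_mul (Nat.cast_nonneg _)]
        gcongr
        exact card_latticeBox_le hr

lemma tsum_indicator_le_tsum_tsum_indicator {α ι : Type*} {A : Set α} {S : ι → Set α}
    (hA : A ⊆ ⋃ k, S k) (f : α → ℝ≥0∞) :
    ∑' y, A.indicator f y ≤ ∑' k, ∑' y, (S k).indicator f y := by
  rw [ENNReal.tsum_comm]
  refine ENNReal.tsum_le_tsum fun y => ?_
  by_cases hy : y ∈ A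
  · obtain ⟨k, hk⟩ := Set.mem_iUnion.1 (hA hy)
    rw [Set.indicator_of_mem hy, ← Set.indicator_of_mem hk f]
    exact ENNReal.le_tsum k
  · rw [Set.indicator_of_notMem hy]
    exact zero_le

def weight (L s : ℝ) (y : V d) : ℝ≥0∞ := ENNReal.ofReal (bkt L y ^ (-s))

def bktBall (L R : ℝ) : Set (V d) := {y | bkt L y ≤ R}

def bktTail (L R : ℝ) : Set (V d) := {y | R ≤ bkt L y}

def dyadicShell (L ρ : ℝ) : Set (V d) := {y | ρ ≤ bkt L y ∧ bkt L y ≤ 2 * ρ}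

lemma tsum_dyadicShell_le {L s ρ : ℝ} (hL : 1 ≤ L) (hs : 0 ≤ s) (hρ : 0 < ρ) :
    ∑' y : V d, (dyadicShell L ρ).indicator (weight L s) y ≤
      ENNReal.ofReal (6 ^ d * ρ ^ ((d : ℝ) - s)) := by
  rcases lt_or_ge ρ (1 / 2) with hsmall | hbig
  · have : dyadicShell L ρ = (∅ : Set (V d)) :=
      Set.eq_empty_of_forall_notMem fun y hy => by linarith [hy.2, one_le_bkt hL y]
    simp [this]
  calc ∑' y, (dyadicShell L ρ).indicator (weight L s) y
      ≤ ENNReal.ofReal ((2 * (2 * ρ) + 1) ^ d * ρ ^ (-s)) :=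
        tsum_indicator_le_of_forall_nrm_le (by positivity) (by positivity)
          (fun y hy => (nrm_le_bkt L y).trans hy.2)
          (fun y hy => ENNReal.ofReal_le_ofReal
            (Real.rpow_le_rpow_of_nonpos hρ hy.1 (neg_nonpos.2 hs)))
    _ ≤ ENNReal.ofReal ((6 * ρ) ^ d * ρ ^ (-s)) := by gcongr; linarith
    _ = ENNReal.ofReal (6 ^ d * ρ ^ ((d : ℝ) - s)) := by
        rw [mul_pow, sub_eq_add_neg, Real.rpow_add hρ, Real.rpow_natCast, mul_assoc]

lemma tsum_tsum_dyadicShell_geometric_le {L s R q : ℝ} (hL : 1 ≤ L) (hs : 0 ≤ s) (hR : 0 < R)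
    (hq : 0 < q) (hθ : q ^ ((d : ℝ) - s) < 1) :
    ∑' k : ℕ, ∑' y : V d, (dyadicShell L (R * q ^ k)).indicator (weight L s) y ≤
      ENNReal.ofReal (6 ^ d * (1 - q ^ ((d : ℝ) - s))⁻¹ * R ^ ((d : ℝ) - s)) := by
  set θ := q ^ ((d : ℝ) - s)
  have hθ0 : 0 ≤ θ := Real.rpow_nonneg hq.le _
  calc ∑' k : ℕ, ∑' y, (dyadicShell L (R * q ^ k)).indicator (weight L s) y
      ≤ ∑' k : ℕ, ENNReal.ofReal (6 ^ d * R ^ ((d : ℝ) - s) * θ ^ k) := by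
        refine ENNReal.tsum_le_tsum fun k =>
          (tsum_dyadicShell_le hL hs (by positivity)).trans_eq ?_
        rw [Real.mul_rpow hR.le (by positivity), ← Real.rpow_pow_comm hq.le, mul_assoc]
    _ = ENNReal.ofReal (∑' k : ℕ, 6 ^ d * R ^ ((d : ℝ) - s) * θ ^ k) :=
        (ENNReal.ofReal_tsum_of_nonneg (fun k => by positivity)
          ((summable_geometric_of_lt_one hθ0 hθ).mul_left _)).symm
    _ = ENNReal.ofReal (6 ^ d * (1 - θ)⁻¹ * R ^ ((d : ℝ) - s)) := by
        rw [tsum_mul_left, tsum_geometric_of_lt_one hθ0 hθ, mul_right_comm]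

lemma tsum_tail_le {s : ℝ} (hs : (d : ℝ) < s) :
    ∃ C, 0 ≤ C ∧ ∀ L, 1 ≤ L → ∀ R, 0 < R →
      ∑' y, (bktTail L R : Set (V d)).indicator (weight L s) y ≤
        ENNReal.ofReal (C * R ^ ((d : ℝ) - s)) := by
  have hθ : (2 : ℝ) ^ ((d : ℝ) - s) < 1 :=
    Real.rpow_lt_one_of_one_lt_of_neg one_lt_two (by linarith)
  refine ⟨6 ^ d * (1 - 2 ^ ((d : ℝ) - s))⁻¹, by have := sub_pos.2 hθ; positivity,
    fun L hL R hR => ?_⟩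
  refine (tsum_indicator_le_tsum_tsum_indicator (S := fun k : ℕ => dyadicShell L (R * 2 ^ k))
    (fun y hy => ?_) _).trans
      (tsum_tsum_dyadicShell_geometric_le hL ((Nat.cast_nonneg d).trans hs.le) hR two_pos hθ)
  obtain ⟨k, hk, hk'⟩ := exists_nat_pow_near ((one_le_div hR).2 hy) one_lt_two
  rw [le_div_iff₀ hR] at hk
  rw [div_lt_iff₀ hR, pow_succ] at hk'
  exact Set.mem_iUnion.2 ⟨k, by constructor <;> nlinarith⟩

lemma tsum_ball_le {s : ℝ} (hs0 : 0 ≤ s) (hs : s < d) :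
    ∃ C, 0 ≤ C ∧ ∀ L, 1 ≤ L → ∀ R, 0 < R →
      ∑' y, (bktBall L R : Set (V d)).indicator (weight L s) y ≤
        ENNReal.ofReal (C * R ^ ((d : ℝ) - s)) := by
  set θ := (2⁻¹ : ℝ) ^ ((d : ℝ) - s) with hθdef
  have hθ : θ < 1 := Real.rpow_lt_one (by norm_num) (by norm_num) (by linarith)
  refine ⟨6 ^ d * (1 - θ)⁻¹ * θ, by have := sub_pos.2 hθ; positivity, fun L hL R hR => ?_⟩
  calc ∑' y, (bktBall L R : Set (V d)).indicator (weight L s) y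
      ≤ ∑' k : ℕ, ∑' y, (dyadicShell L (R / 2 * 2⁻¹ ^ k)).indicator (weight L s) y := by
        refine tsum_indicator_le_tsum_tsum_indicator (fun y hy => ?_) _
        have hv := bkt_pos hL y
        obtain ⟨k, hk, hk'⟩ := exists_nat_pow_near ((one_le_div hv).2 hy) one_lt_two
        rw [le_div_iff₀ hv] at hk
        rw [div_lt_iff₀ hv] at hk'
        refine Set.mem_iUnion.2 ⟨k, ?_⟩
        constructor
        · rw [show R / 2 * 2⁻¹ ^ k = R / 2 ^ (k + 1) by rw [inv_pow, pow_succ]; field_simp,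
            div_le_iff₀ (by positivity)]
          linarith
        · rw [show 2 * (R / 2 * 2⁻¹ ^ k) = R / 2 ^ k by rw [inv_pow]; field_simp,
            le_div_iff₀ (by positivity)]
          linarith
    _ ≤ ENNReal.ofReal (6 ^ d * (1 - θ)⁻¹ * (R / 2) ^ ((d : ℝ) - s)) :=
        tsum_tsum_dyadicShell_geometric_le hL hs0 (by positivity) (by norm_num) hθ
    _ = ENNReal.ofReal (6 ^ d * (1 - θ)⁻¹ * θ * R ^ ((d : ℝ) - s)) := by
        rw [div_eq_mul_inv, Real.mul_rpow hR.le (by norm_num), ← hθdef]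
        congr 1
        ring

lemma tsum_weight_le {s : ℝ} (hs : (d : ℝ) < s) :
    ∃ C, 0 ≤ C ∧ ∀ L, 1 ≤ L →
      ∑' y : V d, weight L s y ≤ ENNReal.ofReal (C * L ^ ((d : ℝ) - s)) := by
  obtain ⟨C, hC0, hC⟩ := tsum_tail_le hs
  refine ⟨C, hC0, fun L hL => ?_⟩
  have huniv : (bktTail L L : Set (V d)) = Set.univ := Set.eq_univ_of_forall (le_bkt L)
  simpa only [huniv, Set.indicator_univ] using hC L hL L (by linarith)

lemma tsum_apply_sub_left {M : Type*} [AddCommMonoid M] [TopologicalSpace M] (f : V d → M)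
    (x : V d) : ∑' y, f (x - y) = ∑' y, f y :=
  (Equiv.subLeft x).tsum_eq f

lemma rpow_neg_le_of_half_le {u w a : ℝ} (hw : 0 < w) (hu : w / 2 ≤ u) (ha : 0 ≤ a) :
    u ^ (-a) ≤ 2 ^ a * w ^ (-a) :=
  calc u ^ (-a) ≤ (w / 2) ^ (-a) :=
        Real.rpow_le_rpow_of_nonpos (by positivity) hu (neg_nonpos.2 ha)
    _ = 2 ^ a * w ^ (-a) := by
        rw [Real.div_rpow hw.le zero_le_two, Real.rpow_neg zero_le_two, div_eq_mul_inv, inv_inv,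
          mul_comm]

lemma rpow_neg_mul_rpow_neg_le {u v w a b : ℝ} (hu : 0 < u) (hv : 0 < v) (hw : 0 < w)
    (hwuv : w ≤ u + v) (hb : 0 ≤ b) (hba : b ≤ a) :
    u ^ (-a) * v ^ (-b) ≤ 2 ^ a * w ^ (-b) * (u ^ (-a) + v ^ (-a)) := by
  rcases le_or_gt (w / 2) v with hv2 | hv2
  · have h2 : (2 : ℝ) ^ b ≤ 2 ^ a := Real.rpow_le_rpow_of_exponent_le one_le_two hba
    calc u ^ (-a) * v ^ (-b) ≤ u ^ (-a) * (2 ^ a * w ^ (-b)) := by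
          gcongr
          exact (rpow_neg_le_of_half_le hw hv2 hb).trans (by gcongr)
      _ = 2 ^ a * w ^ (-b) * u ^ (-a) := by ring
      _ ≤ 2 ^ a * w ^ (-b) * (u ^ (-a) + v ^ (-a)) := by
          gcongr
          exact le_add_of_nonneg_right (by positivity)
  · calc u ^ (-a) * v ^ (-b) ≤ 2 ^ a * w ^ (-a) * v ^ (-b) := by
          gcongr
          exact rpow_neg_le_of_half_le hw (by linarith) (hb.trans hba)
      _ = 2 ^ a * w ^ (-b) * (w ^ (b - a) * v ^ (-b)) := by
          rw [← mul_assoc, mul_assoc _ (w ^ (-b)), ← Real.rpow_add hw]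
          ring_nf
      _ ≤ 2 ^ a * w ^ (-b) * (v ^ (b - a) * v ^ (-b)) := by
          have hvw : w ^ (b - a) ≤ v ^ (b - a) :=
            Real.rpow_le_rpow_of_nonpos hv (by linarith) (by linarith)
          have := Real.rpow_nonneg hv.le (-b)
          have := Real.rpow_nonneg hw.le (-b)
          exact mul_le_mul_of_nonneg_left (mul_le_mul_of_nonneg_right hvw (by positivity))
            (by positivity)
      _ = 2 ^ a * w ^ (-b) * v ^ (-a) := by
          rw [← Real.rpow_add hv]
          ring_nf
      _ ≤ 2 ^ a * w ^ (-b) * (u ^ (-a) + v ^ (-a)) := by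
          gcongr
          exact le_add_of_nonneg_left (by positivity)

theorem tsum_bkt_rpow_mul_le_of_dim_lt {a b : ℝ} (hda : (d : ℝ) < a) (hb : 0 ≤ b)
    (hba : b ≤ a) :
    ∃ C, 0 ≤ C ∧ ∀ L, 1 ≤ L → ∀ x : V d,
      ∑' y, ENNReal.ofReal (bkt L (x - y) ^ (-a) * bkt L y ^ (-b)) ≤
        ENNReal.ofReal (C * L ^ ((d : ℝ) - a) * bkt L x ^ (-b)) := by
  obtain ⟨C, hC0, hC⟩ := tsum_weight_le (d := d) hda
  refine ⟨2 * 2 ^ a * C, by positivity, fun L hL x => ?_⟩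
  set k := 2 ^ a * bkt L x ^ (-b)
  have hk : 0 ≤ k := by have := bkt_pos hL x; positivity
  calc ∑' y, ENNReal.ofReal (bkt L (x - y) ^ (-a) * bkt L y ^ (-b))
      ≤ ∑' y, ENNReal.ofReal k * (weight L a (x - y) + weight L a y) := by
        refine ENNReal.tsum_le_tsum fun y => ?_
        have := bkt_pos hL (x - y)
        have := bkt_pos hL y
        rw [weight, weight, ← ENNReal.ofReal_add (by positivity) (by positivity),
          ← ENNReal.ofReal_mul hk]
        exact ENNReal.ofReal_le_ofReal (rpow_neg_mul_rpow_neg_le (bkt_pos hL _) (bkt_pos hL _)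
          (bkt_pos hL x) (by simpa using bkt_add_le L (x - y) y) hb hba)
    _ = ENNReal.ofReal k * (∑' y, weight L a y + ∑' y, weight L a y) := by
        rw [ENNReal.tsum_mul_left, ENNReal.tsum_add, tsum_apply_sub_left]
    _ ≤ ENNReal.ofReal k *
          (ENNReal.ofReal (C * L ^ ((d : ℝ) - a)) + ENNReal.ofReal (C * L ^ ((d : ℝ) - a))) := by
        gcongr <;> exact hC L hL
    _ = ENNReal.ofReal (2 * 2 ^ a * C * L ^ ((d : ℝ) - a) * bkt L x ^ (-b)) := by
        have := Real.rpow_nonneg (zero_le_one.trans hL) ((d : ℝ) - a)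
        rw [← ENNReal.ofReal_add (by positivity) (by positivity), ← ENNReal.ofReal_mul hk]
        congr 1
        ring

lemma ofReal_rpow_mul_le_three_regions {L a b : ℝ} (hL : 1 ≤ L) (ha : 0 ≤ a) (hb : 0 ≤ b)
    (x y : V d) :
    ENNReal.ofReal (bkt L (x - y) ^ (-a) * bkt L y ^ (-b)) ≤
      ENNReal.ofReal (2 ^ a) * (bktTail L (2 * bkt L x)).indicator (weight L (a + b)) y +
      ENNReal.ofReal (2 ^ b * bkt L x ^ (-b)) *
        (bktBall L (3 * bkt L x)).indicator (weight L a) (x - y) +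
      ENNReal.ofReal (2 ^ a * bkt L x ^ (-a)) *
        (bktBall L (bkt L x)).indicator (weight L b) y := by
  have hu := bkt_pos hL (x - y)
  have hv := bkt_pos hL y
  have hw := bkt_pos hL x
  have hwuv : bkt L x ≤ bkt L (x - y) + bkt L y := by simpa using bkt_add_le L (x - y) y
  have hvuw : bkt L y ≤ bkt L (x - y) + bkt L x := by
    have := bkt_add_le L (y - x) x
    rwa [sub_add_cancel, ← neg_sub, bkt_neg] at this
  have huvw : bkt L (x - y) ≤ bkt L y + bkt L x := by
    have := bkt_add_le L (-y) x
    rwa [neg_add_eq_sub, bkt_neg] at this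
  rcases le_or_gt (2 * bkt L x) (bkt L y) with hfar | hclose
  · refine le_add_right (le_add_right ?_)
    rw [Set.indicator_of_mem (show y ∈ bktTail L (2 * bkt L x) from hfar), weight,
      ← ENNReal.ofReal_mul (by positivity)]
    refine ENNReal.ofReal_le_ofReal ?_
    calc bkt L (x - y) ^ (-a) * bkt L y ^ (-b)
        ≤ 2 ^ a * bkt L y ^ (-a) * bkt L y ^ (-b) := by
          gcongr
          exact rpow_neg_le_of_half_le hv (by linarith) ha
      _ = 2 ^ a * bkt L y ^ (-(a + b)) := by rw [neg_add, Real.rpow_add hv]; ring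
  rcases le_or_gt (bkt L x / 2) (bkt L y) with hmid | hnear
  · refine le_add_right (le_add_left ?_)
    rw [Set.indicator_of_mem
        (show x - y ∈ bktBall L (3 * bkt L x) from
          (by linarith : bkt L (x - y) ≤ 3 * bkt L x)),
      weight, ← ENNReal.ofReal_mul (by positivity)]
    refine ENNReal.ofReal_le_ofReal ?_
    calc bkt L (x - y) ^ (-a) * bkt L y ^ (-b)
        ≤ bkt L (x - y) ^ (-a) * (2 ^ b * bkt L x ^ (-b)) := by
          gcongr
          exact rpow_neg_le_of_half_le hw hmid hb
      _ = 2 ^ b * bkt L x ^ (-b) * bkt L (x - y) ^ (-a) := by ring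
  · refine le_add_left ?_
    rw [Set.indicator_of_mem
        (show y ∈ bktBall L (bkt L x) from (by linarith : bkt L y ≤ bkt L x)),
      weight, ← ENNReal.ofReal_mul (by positivity)]
    refine ENNReal.ofReal_le_ofReal ?_
    gcongr
    exact rpow_neg_le_of_half_le hw (by linarith) ha

theorem tsum_bkt_rpow_mul_le_of_lt_dim {a b : ℝ} (ha : a < d) (hb0 : 0 ≤ b) (hb : b < d)
    (hab : (d : ℝ) < a + b) :
    ∃ C, 0 ≤ C ∧ ∀ L, 1 ≤ L → ∀ x : V d,
      ∑' y, ENNReal.ofReal (bkt L (x - y) ^ (-a) * bkt L y ^ (-b)) ≤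
        ENNReal.ofReal (C * bkt L x ^ ((d : ℝ) - a - b)) := by
  have ha0 : 0 ≤ a := by linarith
  obtain ⟨Ct, hCt0, hCt⟩ := tsum_tail_le (d := d) hab
  obtain ⟨Ca, hCa0, hCa⟩ := tsum_ball_le (d := d) ha0 ha
  obtain ⟨Cb, hCb0, hCb⟩ := tsum_ball_le (d := d) hb0 hb
  refine ⟨2 ^ a * Ct * 2 ^ ((d : ℝ) - (a + b)) + 2 ^ b * Ca * 3 ^ ((d : ℝ) - a) + 2 ^ a * Cb,
    by positivity, fun L hL x => ?_⟩
  set w := bkt L x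
  have hw : 0 < w := bkt_pos hL x
  set far := (bktTail L (2 * w)).indicator (weight L (a + b))
  set mid := (bktBall L (3 * w)).indicator (weight L a)
  set near := (bktBall L w).indicator (weight L b)
  calc ∑' y, ENNReal.ofReal (bkt L (x - y) ^ (-a) * bkt L y ^ (-b))
      ≤ ∑' y, (ENNReal.ofReal (2 ^ a) * far y + ENNReal.ofReal (2 ^ b * w ^ (-b)) * mid (x - y) +
          ENNReal.ofReal (2 ^ a * w ^ (-a)) * near y) :=
        ENNReal.tsum_le_tsum fun y => ofReal_rpow_mul_le_three_regions hL ha0 hb0 x y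
    _ = ENNReal.ofReal (2 ^ a) * ∑' y, far y + ENNReal.ofReal (2 ^ b * w ^ (-b)) * ∑' z, mid z +
          ENNReal.ofReal (2 ^ a * w ^ (-a)) * ∑' y, near y := by
        rw [ENNReal.tsum_add, ENNReal.tsum_add, ENNReal.tsum_mul_left, ENNReal.tsum_mul_left,
          ENNReal.tsum_mul_left, tsum_apply_sub_left mid x]
    _ ≤ ENNReal.ofReal (2 ^ a) * ENNReal.ofReal (Ct * (2 * w) ^ ((d : ℝ) - (a + b))) +
          ENNReal.ofReal (2 ^ b * w ^ (-b)) * ENNReal.ofReal (Ca * (3 * w) ^ ((d : ℝ) - a)) +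
          ENNReal.ofReal (2 ^ a * w ^ (-a)) * ENNReal.ofReal (Cb * w ^ ((d : ℝ) - b)) := by
        gcongr
        exacts [hCt L hL _ (by positivity), hCa L hL _ (by positivity), hCb L hL _ hw]
    _ = ENNReal.ofReal ((2 ^ a * Ct * 2 ^ ((d : ℝ) - (a + b)) + 2 ^ b * Ca * 3 ^ ((d : ℝ) - a) +
          2 ^ a * Cb) * w ^ ((d : ℝ) - a - b)) := by
        rw [← ENNReal.ofReal_mul (by positivity), ← ENNReal.ofReal_mul (by positivity),
          ← ENNReal.ofReal_mul (by positivity),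
          ← ENNReal.ofReal_add (by positivity) (by positivity),
          ← ENNReal.ofReal_add (by positivity) (by positivity)]
        congr 1
        have e1 : (2 * w) ^ ((d : ℝ) - (a + b)) =
            2 ^ ((d : ℝ) - (a + b)) * w ^ ((d : ℝ) - a - b) := by
          rw [Real.mul_rpow zero_le_two hw.le, sub_add_eq_sub_sub]
        have e2 : w ^ (-b) * (3 * w) ^ ((d : ℝ) - a) =
            3 ^ ((d : ℝ) - a) * w ^ ((d : ℝ) - a - b) := by
          rw [Real.mul_rpow zero_le_three hw.le, mul_left_comm, ← Real.rpow_add hw]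
          congr 2
          ring
        have e3 : w ^ (-a) * w ^ ((d : ℝ) - b) = w ^ ((d : ℝ) - a - b) := by
          rw [← Real.rpow_add hw]
          congr 1
          ring
        linear_combination (2 ^ a * Ct) * e1 + (2 ^ b * Ca) * e2 + (2 ^ a * Cb) * e3

theorem statement13_general (d : ℕ) (a b : ℝ) (hba : b ≤ a) (hb : 0 < b)
    (hab : (d : ℝ) < a + b) :
    ∃ C : ℝ, 0 ≤ C ∧ ∀ L : ℝ, 1 ≤ L → ∀ x : V d,
      ((d : ℝ) < a →
        (∑' y : V d, ENNReal.ofReal (bkt L (x - y) ^ (-a) * bkt L y ^ (-b))) ≤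
          ENNReal.ofReal (C * L ^ ((d : ℝ) - a) * bkt L x ^ (-b))) ∧
      (a < (d : ℝ) →
        (∑' y : V d, ENNReal.ofReal (bkt L (x - y) ^ (-a) * bkt L y ^ (-b))) ≤
          ENNReal.ofReal (C * bkt L x ^ ((d : ℝ) - a - b))) := by
  by_cases hda : (d : ℝ) < a
  · obtain ⟨C, hC0, hC⟩ := tsum_bkt_rpow_mul_le_of_dim_lt hda hb.le hba
    exact ⟨C, hC0, fun L hL x => ⟨fun _ => hC L hL x, fun had => absurd had (lt_asymm hda)⟩⟩
  by_cases had : a < d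
  · obtain ⟨C, hC0, hC⟩ := tsum_bkt_rpow_mul_le_of_lt_dim had hb.le (hba.trans_lt had) hab
    exact ⟨C, hC0, fun L hL x => ⟨fun h => absurd h hda, fun _ => hC L hL x⟩⟩
  exact ⟨0, le_rfl, fun _ _ _ => ⟨fun h => absurd h hda, fun h => absurd h had⟩⟩

/-- convolution bounds for the weights `⟨·⟩_L^{−a}` and `⟨·⟩_L^{−b}`. -/
theorem statement13 (d : ℕ) (hd : 1 ≤ d) (a b : ℝ) (hba : b ≤ a) (hb : 0 < b)
    (hab : (d : ℝ) < a + b) :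
    ∃ C : ℝ, 0 ≤ C ∧ ∀ L : ℝ, 1 ≤ L → ∀ x : V d,
      ((d : ℝ) < a →
        (∑' y : V d, ENNReal.ofReal (bkt L (x - y) ^ (-a) * bkt L y ^ (-b))) ≤
          ENNReal.ofReal (C * L ^ ((d : ℝ) - a) * bkt L x ^ (-b))) ∧
      (a < (d : ℝ) →
        (∑' y : V d, ENNReal.ofReal (bkt L (x - y) ^ (-a) * bkt L y ^ (-b))) ≤
          ENNReal.ofReal (C * bkt L x ^ ((d : ℝ) - a - b))) :=
  statement13_general d a b hba hb hab

end LongRange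
end
end
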